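/- arXiv:1905.08120 — 3 statements merged into one kernel-verified Lean document; each statement's English description precedes it below -/
import Mathlib

section
/- For all n ≥ 1 and k ≥ 1, R_n^(k) = {P ∪ (P·g)↑ : P ∈ R_n^(k−1), g : {0,…,n−1} → {0,…,n−1}}. -/
open Finset

/-- `Π·h`: the vector whose `q`-th entry is the union of the `Π p` over all `p` with `h p = q`. -/
def dotAct {n : ℕ} (Pi : Fin n → Finset ℕ) (h : Fin n → Fin n) : Fin n → Finset ℕ :=
  fun q => (Finset.univ.filter (fun p => h p = q)).biUnion Pi

/-- Entrywise union of two vectors of sets. -/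
def vUnion {n : ℕ} (Pi Pi' : Fin n → Finset ℕ) : Fin n → Finset ℕ :=
  fun q => Pi q ∪ Pi' q

/-- `r = max (π₀ ∪ … ∪ π_{n−1})`. -/
def vMax {n : ℕ} (Pi : Fin n → Finset ℕ) : ℕ :=
  (Finset.univ.sup Pi).sup id

/-- `Π↑`: add `r = max (π₀ ∪ … ∪ π_{n−1})` to every element of every entry. -/
def vUp {n : ℕ} (Pi : Fin n → Finset ℕ) : Fin n → Finset ℕ :=
  fun q => (Pi q).image (· + vMax Pi)

/-- A `k`-EXPcomposition of size `n`: pairwise disjoint entries whose union is `{1,…,2^k}`. -/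
def IsEXP {n : ℕ} (k : ℕ) (Pi : Fin n → Finset ℕ) : Prop :=
  (∀ p q : Fin n, p ≠ q → Disjoint (Pi p) (Pi q)) ∧
    Finset.univ.sup Pi = Finset.Icc 1 (2 ^ k)

/-- A `k`-Rvalid vector of size `n`. -/
def IsRvalid {n : ℕ} (k : ℕ) (ρ : Fin n → Finset ℕ) : Prop :=
  IsEXP k ρ ∧ (∀ p : Fin n, p.val = 0 → 1 ∈ ρ p) ∧
    ∀ k' < k, ∀ i ∈ Finset.Icc 1 (2 ^ k'), ∀ j ∈ Finset.Icc 1 (2 ^ k'),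
      (∃ α, i ∈ ρ α ∧ j ∈ ρ α) → ∃ β, i + 2 ^ k' ∈ ρ β ∧ j + 2 ^ k' ∈ ρ β

/-- A `k`-Lvalid vector of size `m`. -/
def IsLvalid {m : ℕ} (k : ℕ) (lam : Fin m → Finset ℕ) : Prop :=
  IsEXP k lam ∧ (∀ p : Fin m, p.val = 0 → 2 ^ k ∈ lam p) ∧
    ∀ k' < k, ∀ i ∈ Finset.Icc 1 (2 ^ k'), ∀ j ∈ Finset.Icc 1 (2 ^ k'),
      (∃ α, 2 ^ k + 1 - i ∈ lam α ∧ 2 ^ k + 1 - j ∈ lam α) →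
        ∃ β, 2 ^ k + 1 - (i + 2 ^ k') ∈ lam β ∧ 2 ^ k + 1 - (j + 2 ^ k') ∈ lam β

/-- Number of nonempty entries of a vector of sets. -/
def nne {n : ℕ} (Pi : Fin n → Finset ℕ) : ℕ :=
  (Finset.univ.filter (fun q => Pi q ≠ ∅)).card

/-- `succ(P) = {P ∪ (P·g)↑ : g}`. -/
def succSet {n : ℕ} (P : Fin n → Finset ℕ) : Finset (Fin n → Finset ℕ) :=
  (Finset.univ : Finset (Fin n → Fin n)).image (fun g => vUnion P (vUp (dotAct P g)))

/-- The graded set `U_{m,n}^{(k)}` of U-pairs. -/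
def Uset (m n : ℕ) : ℕ → Set ((Fin m → Finset ℕ) × (Fin n → Finset ℕ))
  | 0 => {x | x = (fun p => if p.val = 0 then {1} else ∅,
                   fun q => if q.val = 0 then {1} else ∅)}
  | k + 1 => {x | ∃ L P, (L, P) ∈ Uset m n k ∧ ∃ (f : Fin m → Fin m) (g : Fin n → Fin n),
      x = (vUnion (dotAct L f) (vUp L), vUnion P (vUp (dotAct P g)))}

/-- The `r`-Stirling number: partitions of `{1,…,a}` into `b` nonempty blocks
with `1,…,r` in pairwise distinct blocks. -/
noncomputable def rStirling (a b r : ℕ) : ℕ :=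
  Set.ncard {C : Finset (Finset ℕ) |
    C.card = b ∧ (∅ ∉ C) ∧
    (∀ B ∈ C, ∀ B' ∈ C, B ≠ B' → Disjoint B B') ∧
    C.sup id = Finset.Icc 1 a ∧
    ∀ x ∈ Finset.Icc 1 r, ∀ y ∈ Finset.Icc 1 r, x ≠ y →
      ∀ B ∈ C, x ∈ B → y ∉ B}

/-- The Stirling number of the second kind: the number of partitions of an
`a`-element set into `b` nonempty blocks. -/
noncomputable def stirling2 (a b : ℕ) : ℕ := rStirling a b 0

/-- The entry `s_n^{(i,j)}` (with `1 ≤ i,j ≤ n`). -/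
noncomputable def sEntry (n i j : ℕ) : ℕ :=
  if i ≤ j then
    (j - i).factorial * Nat.choose (n - i) (j - i) *
      ∑ α ∈ Finset.Icc (j - i) i, Nat.choose i α * i ^ (i - α) * stirling2 α (j - i)
  else 0

/-- The matrix `S_n`, with rows and columns indexed by `{1,…,n}`. -/
noncomputable def Smat (n : ℕ) : Matrix (Fin n) (Fin n) ℕ :=
  fun i j => sEntry n (i.val + 1) (j.val + 1)

/-- One step of the shuffle-automaton action on subsets of the grid. -/
def stepE {m n : ℕ} (E : Finset (Fin m × Fin n)) (f : Fin m → Fin m) (g : Fin n → Fin n) :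
    Finset (Fin m × Fin n) :=
  E.image (fun p => (f p.1, p.2)) ∪ E.image (fun p => (p.1, g p.2))

/-- Reachability from `{(0,0)}` by finitely many steps. -/
def Reach {m n : ℕ} (hm : 0 < m) (hn : 0 < n) (E : Finset (Fin m × Fin n)) : Prop :=
  Relation.ReflTransGen (fun E1 E2 => ∃ f g, E2 = stepE E1 f g)
    {(⟨0, hm⟩, ⟨0, hn⟩)} E

/-- Reachability from `{(0,0)}` in at most `t` steps. -/
def ReachIn {m n : ℕ} (hm : 0 < m) (hn : 0 < n) :
    ℕ → Finset (Fin m × Fin n) → Prop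
  | 0, E => E = {(⟨0, hm⟩, ⟨0, hn⟩)}
  | t + 1, E => ReachIn hm hn t E ∨
      ∃ E' f g, ReachIn hm hn t E' ∧ E = stepE E' f g

/-- `s(Λ,P) = {(i,j) : λ_i ∩ ρ_j ≠ ∅}`. -/
def sTab {m n : ℕ} (L : Fin m → Finset ℕ) (P : Fin n → Finset ℕ) :
    Finset (Fin m × Fin n) :=
  Finset.univ.filter (fun p => (L p.1 ∩ P p.2).Nonempty)

/-!
A `(k+1)`-Rvalid vector `ρ` is cut into its restriction `P` to `{1,…,2^k}` and its upper half.
The conditions for `k' < k` only involve elements `≤ 2^k`, so `P` is `k`-Rvalid; the condition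
for `k' = k` says that the shift by `2^k` of each entry of `P` lies in a single entry `ρ (g α)`,
and since `ρ` is a partition this pins down the upper half as `(P·g)↑`. Conversely `(P·g)↑` only
adds elements `> 2^k`, so the conditions for `k' < k` are inherited from `P`, while the one for
`k' = k` holds by construction.
-/

def vTrunc {n : ℕ} (ρ : Fin n → Finset ℕ) (N : ℕ) : Fin n → Finset ℕ :=
  fun q => (ρ q).filter (· ≤ N)

section

variable {n k : ℕ}

@[simp]
lemma mem_dotAct {Pi : Fin n → Finset ℕ} {h : Fin n → Fin n} {q : Fin n} {x : ℕ} :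
    x ∈ dotAct Pi h q ↔ ∃ p, h p = q ∧ x ∈ Pi p := by
  simp [dotAct]

@[simp]
lemma mem_vTrunc {ρ : Fin n → Finset ℕ} {N : ℕ} {q : Fin n} {x : ℕ} :
    x ∈ vTrunc ρ N q ↔ x ∈ ρ q ∧ x ≤ N :=
  mem_filter

lemma vMax_of_sup_eq_Icc {Pi : Fin n → Finset ℕ} {N : ℕ} (h : univ.sup Pi = Icc 1 N) :
    vMax Pi = N := by
  refine le_antisymm ?_ ?_
  · rw [vMax, h]
    exact Finset.sup_le fun x hx => (mem_Icc.mp hx).2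
  · rcases Nat.eq_zero_or_pos N with rfl | hN
    · exact Nat.zero_le _
    · rw [vMax, h]
      exact le_sup (f := id) (mem_Icc.mpr ⟨hN, le_rfl⟩)

lemma mem_vUnion_vUp_dotAct {P : Fin n → Finset ℕ} {N : ℕ} (hP : univ.sup P = Icc 1 N)
    {g : Fin n → Fin n} {q : Fin n} {x : ℕ} :
    x ∈ vUnion P (vUp (dotAct P g)) q ↔ x ∈ P q ∨ ∃ p, g p = q ∧ ∃ i ∈ P p, i + N = x := by
  have hD : univ.sup (dotAct P g) = Icc 1 N := by
    rw [← hP]; ext y; simp only [mem_sup, mem_univ, true_and, mem_dotAct]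
    exact ⟨fun ⟨_, p, _, hy⟩ => ⟨p, hy⟩, fun ⟨p, hy⟩ => ⟨g p, p, rfl, hy⟩⟩
  simp only [vUnion, vUp, mem_union, mem_image, mem_dotAct, vMax_of_sup_eq_Icc hD]
  grind

namespace IsEXP

variable {ρ : Fin n → Finset ℕ}

lemma mem_Icc_of_mem (h : IsEXP k ρ) {q : Fin n} {x : ℕ} (hx : x ∈ ρ q) : x ∈ Icc 1 (2 ^ k) :=
  h.2 ▸ mem_sup.mpr ⟨q, mem_univ q, hx⟩

lemma exists_mem (h : IsEXP k ρ) {x : ℕ} (hx : x ∈ Icc 1 (2 ^ k)) : ∃ q, x ∈ ρ q := by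
  rw [← h.2, mem_sup] at hx
  obtain ⟨q, -, hq⟩ := hx
  exact ⟨q, hq⟩

lemma eq_of_mem (h : IsEXP k ρ) {p q : Fin n} {x : ℕ} (hp : x ∈ ρ p) (hq : x ∈ ρ q) : p = q :=
  by_contra fun hpq => disjoint_left.mp (h.1 p q hpq) hp hq

lemma double {P : Fin n → Finset ℕ} (hP : IsEXP k P) (g : Fin n → Fin n) :
    IsEXP (k + 1) (vUnion P (vUp (dotAct P g))) := by
  have hpow : 2 ^ (k + 1) = 2 ^ k + 2 ^ k := by ring
  have hIcc {p : Fin n} {i : ℕ} (hi : i ∈ P p) := mem_Icc.mp (hP.mem_Icc_of_mem hi)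
  refine ⟨fun p q hpq => disjoint_left.mpr fun x hxp hxq => ?_, ?_⟩
  · rw [mem_vUnion_vUp_dotAct hP.2] at hxp hxq
    rcases hxp with hp | ⟨a, rfl, i, hi, rfl⟩ <;> rcases hxq with hq | ⟨b, rfl, j, hj, hji⟩
    · exact hpq (hP.eq_of_mem hp hq)
    · have := hIcc hp; have := hIcc hj; omega
    · have := hIcc hq; have := hIcc hi; omega
    · obtain rfl : j = i := by omega
      exact hpq (congrArg g (hP.eq_of_mem hi hj))
  · ext x
    simp only [mem_sup, mem_univ, true_and, mem_vUnion_vUp_dotAct hP.2]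
    constructor
    · rintro ⟨q, hq | ⟨p, -, i, hi, rfl⟩⟩
      · have := hIcc hq; simp only [mem_Icc]; omega
      · have := hIcc hi; simp only [mem_Icc]; omega
    · intro hx
      rw [mem_Icc] at hx
      by_cases hxk : x ≤ 2 ^ k
      · obtain ⟨q, hq⟩ := hP.exists_mem (mem_Icc.mpr ⟨hx.1, hxk⟩)
        exact ⟨q, .inl hq⟩
      · obtain ⟨p, hp⟩ := hP.exists_mem (x := x - 2 ^ k) (mem_Icc.mpr ⟨by omega, by omega⟩)
        exact ⟨g p, .inr ⟨p, rfl, _, hp, by omega⟩⟩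

lemma trunc (h : IsEXP k ρ) {j : ℕ} (hj : j ≤ k) : IsEXP j (vTrunc ρ (2 ^ j)) := by
  have hjk : 2 ^ j ≤ 2 ^ k := Nat.pow_le_pow_right two_pos hj
  refine ⟨fun p q hpq => (h.1 p q hpq).mono (filter_subset _ _) (filter_subset _ _), ?_⟩
  ext x
  simp only [mem_sup, mem_univ, true_and, mem_vTrunc]
  constructor
  · rintro ⟨q, hq, hx⟩
    have := mem_Icc.mp (h.mem_Icc_of_mem hq)
    exact mem_Icc.mpr ⟨this.1, hx⟩
  · intro hx
    have hx := mem_Icc.mp hx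
    obtain ⟨q, hq⟩ := h.exists_mem (mem_Icc.mpr ⟨hx.1, hx.2.trans hjk⟩)
    exact ⟨q, hq, hx.2⟩

lemma eq_double_of_shift (h : IsEXP (k + 1) ρ) {g : Fin n → Fin n}
    (hg : ∀ α, ∀ i ∈ vTrunc ρ (2 ^ k) α, i + 2 ^ k ∈ ρ (g α)) :
    ρ = vUnion (vTrunc ρ (2 ^ k)) (vUp (dotAct (vTrunc ρ (2 ^ k)) g)) := by
  have hT := h.trunc k.le_succ
  have hpow : 2 ^ (k + 1) = 2 ^ k + 2 ^ k := by ring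
  funext q
  ext x
  rw [mem_vUnion_vUp_dotAct hT.2, mem_vTrunc]
  constructor
  · intro hx
    by_cases hxk : x ≤ 2 ^ k
    · exact .inl ⟨hx, hxk⟩
    · have := mem_Icc.mp (h.mem_Icc_of_mem hx)
      obtain ⟨p, hp⟩ := hT.exists_mem (x := x - 2 ^ k) (mem_Icc.mpr ⟨by omega, by omega⟩)
      have hxp : x ∈ ρ (g p) := by
        simpa [Nat.sub_add_cancel (by omega : 2 ^ k ≤ x)] using hg p _ hp
      exact .inr ⟨p, h.eq_of_mem hxp hx, _, hp, by omega⟩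
  · rintro (⟨hx, -⟩ | ⟨p, rfl, i, hi, rfl⟩)
    · exact hx
    · exact hg p i hi

end IsEXP

namespace IsRvalid

variable {ρ : Fin n → Finset ℕ}

lemma double {P : Fin n → Finset ℕ} (hP : IsRvalid k P) (g : Fin n → Fin n) :
    IsRvalid (k + 1) (vUnion P (vUp (dotAct P g))) := by
  obtain ⟨hexp, hone, hshift⟩ := hP
  have mem_iff {q : Fin n} {x : ℕ} := mem_vUnion_vUp_dotAct (g := g) (q := q) (x := x) hexp.2
  refine ⟨hexp.double g, fun p hp => mem_iff.mpr (.inl (hone p hp)), ?_⟩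
  rintro k' hk' i hi j hj ⟨α, hiα, hjα⟩
  have hk'k : 2 ^ k' ≤ 2 ^ k := Nat.pow_le_pow_right two_pos (by omega)
  -- the shifted entries exceed `2 ^ k`, so `i` and `j` already lie in `P α`
  have lower {x : ℕ} (hx : x ∈ Icc 1 (2 ^ k')) (hxα : x ∈ vUnion P (vUp (dotAct P g)) α) :
      x ∈ P α := by
    rcases mem_iff.mp hxα with h | ⟨p, -, y, hy, rfl⟩
    · exact h
    · have := mem_Icc.mp (hexp.mem_Icc_of_mem hy); have := mem_Icc.mp hx; omega
  rcases Nat.lt_succ_iff_lt_or_eq.mp hk' with hlt | rfl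
  · obtain ⟨β, hiβ, hjβ⟩ := hshift k' hlt i hi j hj ⟨α, lower hi hiα, lower hj hjα⟩
    exact ⟨β, mem_iff.mpr (.inl hiβ), mem_iff.mpr (.inl hjβ)⟩
  · exact ⟨g α, mem_iff.mpr (.inr ⟨α, rfl, i, lower hi hiα, rfl⟩),
      mem_iff.mpr (.inr ⟨α, rfl, j, lower hj hjα, rfl⟩)⟩

lemma trunc (h : IsRvalid k ρ) {j : ℕ} (hj : j ≤ k) : IsRvalid j (vTrunc ρ (2 ^ j)) := by
  obtain ⟨hexp, hone, hshift⟩ := h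
  refine ⟨hexp.trunc hj, fun p hp => mem_vTrunc.mpr ⟨hone p hp, Nat.one_le_two_pow⟩, ?_⟩
  rintro k' hk' i hi i' hi' ⟨α, hiα, hi'α⟩
  have hk'j : 2 ^ k' + 2 ^ k' ≤ 2 ^ j := by
    rw [← two_mul, ← pow_succ']; exact Nat.pow_le_pow_right two_pos hk'
  have := mem_Icc.mp hi; have := mem_Icc.mp hi'
  obtain ⟨β, hiβ, hi'β⟩ := hshift k' (by omega) i hi i' hi'
    ⟨α, (mem_vTrunc.mp hiα).1, (mem_vTrunc.mp hi'α).1⟩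
  exact ⟨β, mem_vTrunc.mpr ⟨hiβ, by omega⟩, mem_vTrunc.mpr ⟨hi'β, by omega⟩⟩

lemma exists_shift_map (h : IsRvalid (k + 1) ρ) :
    ∃ g : Fin n → Fin n, ∀ α, ∀ i ∈ vTrunc ρ (2 ^ k) α, i + 2 ^ k ∈ ρ (g α) := by
  have (α : Fin n) : ∃ β, ∀ i ∈ vTrunc ρ (2 ^ k) α, i + 2 ^ k ∈ ρ β := by
    have hIcc {i : ℕ} (hi : i ∈ vTrunc ρ (2 ^ k) α) : i ∈ Icc 1 (2 ^ k) :=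
      (h.1.trunc k.le_succ).mem_Icc_of_mem hi
    obtain ⟨i₀, hi₀⟩ | hempty := (vTrunc ρ (2 ^ k) α).eq_empty_or_nonempty.symm
    · obtain ⟨β, hβ, -⟩ := h.2.2 k k.lt_succ_self i₀ (hIcc hi₀) i₀ (hIcc hi₀)
        ⟨α, (mem_vTrunc.mp hi₀).1, (mem_vTrunc.mp hi₀).1⟩
      refine ⟨β, fun i hi => ?_⟩
      obtain ⟨β', hβ', hiβ'⟩ := h.2.2 k k.lt_succ_self i₀ (hIcc hi₀) i (hIcc hi)
        ⟨α, (mem_vTrunc.mp hi₀).1, (mem_vTrunc.mp hi).1⟩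
      rwa [← h.1.eq_of_mem hβ' hβ]
    · exact ⟨α, by simp [hempty]⟩
  exact Classical.axiomOfChoice this

end IsRvalid

end

theorem stmt1_general (n k : ℕ) (hk : 1 ≤ k) :
    {ρ : Fin n → Finset ℕ | IsRvalid k ρ} =
      {ρ' : Fin n → Finset ℕ | ∃ (P : Fin n → Finset ℕ) (g : Fin n → Fin n),
        IsRvalid (k - 1) P ∧ ρ' = vUnion P (vUp (dotAct P g))} := by
  obtain ⟨k, rfl⟩ : ∃ j, k = j + 1 := ⟨k - 1, by omega⟩
  ext ρ
  constructor
  · intro h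
    obtain ⟨g, hg⟩ := h.exists_shift_map
    exact ⟨vTrunc ρ (2 ^ k), g, h.trunc k.le_succ, h.1.eq_double_of_shift hg⟩
  · rintro ⟨P, g, hP, rfl⟩
    exact hP.double g

theorem stmt1 (n k : ℕ) (hn : 1 ≤ n) (hk : 1 ≤ k) :
    {ρ : Fin n → Finset ℕ | IsRvalid k ρ} =
      {ρ' : Fin n → Finset ℕ | ∃ (P : Fin n → Finset ℕ) (g : Fin n → Fin n),
        IsRvalid (k - 1) P ∧ ρ' = vUnion P (vUp (dotAct P g))} :=
  stmt1_general n k hk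
end

section
/- For all m, n ≥ 1, k ≥ 0 and every pair (Λ,P) ∈ U_{m,n}^(k) with Λ = [λ₀,…,λ_{m−1}] and P = [ρ₀,…,ρ_{n−1}]: the sets λ₀,…,λ_{m−1} are pairwise disjoint, the sets ρ₀,…,ρ_{n−1} are pairwise disjoint, and λ₀ ∪ … ∪ λ_{m−1} = ρ₀ ∪ … ∪ ρ_{n−1} = {1,…,2^k}. -/
open Finset

/-!
Both components of a U-pair of grade `k` are set partitions of `{1,…,2^k}` indexed by `Fin m`,
resp. `Fin n` (with empty blocks allowed). Merging blocks along a map `h` (the vector `Π·h`)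
keeps this property. If `A` and `B` are such partitions of `{1,…,N}`, then the maximum of `B`
is `N`, so `B↑` is a partition of `{N+1,…,2N}` and `A ∪ B↑` is a partition of `{1,…,2N}`.
-/

section VectorsOfSets

variable {n : ℕ}

lemma sup_dotAct (Pi : Fin n → Finset ℕ) (g : Fin n → Fin n) :
    univ.sup (dotAct Pi g) = univ.sup Pi := by
  ext x
  simp only [mem_sup, dotAct, mem_biUnion, mem_filter, mem_univ, true_and]
  exact ⟨fun ⟨_, p, _, hx⟩ => ⟨p, hx⟩, fun ⟨p, hx⟩ => ⟨g p, p, rfl, hx⟩⟩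

lemma disjoint_dotAct {Pi : Fin n → Finset ℕ}
    (hPi : ∀ p q : Fin n, p ≠ q → Disjoint (Pi p) (Pi q)) (g : Fin n → Fin n) :
    ∀ p q : Fin n, p ≠ q → Disjoint (dotAct Pi g p) (dotAct Pi g q) := by
  intro p q hpq
  simp only [dotAct, disjoint_biUnion_left, disjoint_biUnion_right, mem_filter, mem_univ,
    true_and]
  rintro b rfl a rfl
  exact hPi a b (by rintro rfl; exact hpq rfl)

lemma sup_vUnion (A B : Fin n → Finset ℕ) :
    univ.sup (vUnion A B) = univ.sup A ∪ univ.sup B :=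
  sup_sup

lemma sup_vUp (Pi : Fin n → Finset ℕ) :
    univ.sup (vUp Pi) = (univ.sup Pi).image (· + vMax Pi) := by
  ext x
  simp only [vUp, mem_sup, mem_image, mem_univ, true_and]
  exact ⟨fun ⟨p, a, ha, hx⟩ => ⟨a, ⟨p, ha⟩, hx⟩, fun ⟨a, ⟨p, ha⟩, hx⟩ => ⟨p, a, ha, hx⟩⟩

end VectorsOfSets

lemma Nat.Icc_one_union_image_add_self (N : ℕ) :
    Icc 1 N ∪ (Icc 1 N).image (· + N) = Icc 1 (2 * N) := by
  ext x
  simp only [mem_union, mem_Icc, mem_image]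
  constructor
  · rintro (hx | ⟨a, ha, rfl⟩) <;> omega
  · intro hx
    by_cases hxN : x ≤ N
    · exact Or.inl ⟨hx.1, hxN⟩
    · exact Or.inr ⟨x - N, by omega, by omega⟩

namespace IsEXP

variable {n k : ℕ}

lemma mem_Icc {Pi : Fin n → Finset ℕ} (h : IsEXP k Pi) {p : Fin n} {x : ℕ} (hx : x ∈ Pi p) :
    x ∈ Icc 1 (2 ^ k) :=
  h.2 ▸ mem_sup.2 ⟨p, mem_univ p, hx⟩

lemma vMax_eq {Pi : Fin n → Finset ℕ} (h : IsEXP k Pi) : vMax Pi = 2 ^ k := by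
  rw [vMax, h.2]
  apply le_antisymm
  · exact Finset.sup_le fun x hx => (Finset.mem_Icc.1 hx).2
  · exact le_sup (f := id) (Finset.mem_Icc.2 ⟨Nat.one_le_two_pow, le_rfl⟩)

lemma dotAct {Pi : Fin n → Finset ℕ} (h : IsEXP k Pi) (g : Fin n → Fin n) :
    IsEXP k (dotAct Pi g) :=
  ⟨disjoint_dotAct h.1 g, (sup_dotAct Pi g).trans h.2⟩

lemma vUnion_vUp {A B : Fin n → Finset ℕ} (hA : IsEXP k A) (hB : IsEXP k B) :
    IsEXP (k + 1) (vUnion A (vUp B)) := by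
  refine ⟨fun p q hpq => ?_, ?_⟩
  · simp only [vUnion, vUp, hB.vMax_eq, disjoint_union_left, disjoint_union_right]
    have hlow : ∀ p q : Fin n, Disjoint (A p) ((B q).image (· + 2 ^ k)) := by
      intro p q
      rw [disjoint_left]
      intro x hx hx'
      obtain ⟨b, hb, rfl⟩ := mem_image.1 hx'
      have := Finset.mem_Icc.1 (hA.mem_Icc hx)
      have := Finset.mem_Icc.1 (hB.mem_Icc hb)
      omega
    exact ⟨⟨hA.1 p q hpq, (hlow q p).symm⟩, hlow p q,
      (disjoint_image (add_left_injective _)).2 (hB.1 p q hpq)⟩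
  · rw [sup_vUnion, sup_vUp, hA.2, hB.2, hB.vMax_eq, Nat.Icc_one_union_image_add_self, pow_succ',
      Nat.two_mul]

end IsEXP

lemma isEXP_zero_indicator {N : ℕ} (hN : 0 < N) :
    IsEXP 0 (fun q : Fin N => if q.val = 0 then ({1} : Finset ℕ) else ∅) := by
  refine ⟨fun p q hpq => ?_, ?_⟩
  · have : p.val ≠ 0 ∨ q.val ≠ 0 := by
      by_contra! h
      exact hpq (Fin.ext (h.1.trans h.2.symm))
    rcases this with hp | hq <;> simp [*]
  · ext x
    simp only [mem_sup, mem_univ, true_and, pow_zero, Icc_self, mem_singleton]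
    constructor
    · rintro ⟨p, hp⟩
      split_ifs at hp <;> simp_all
    · rintro rfl
      exact ⟨⟨0, hN⟩, by simp⟩

lemma isEXP_of_mem_Uset {m n k : ℕ} (hm : 0 < m) (hn : 0 < n) {L : Fin m → Finset ℕ}
    {P : Fin n → Finset ℕ} (h : (L, P) ∈ Uset m n k) : IsEXP k L ∧ IsEXP k P := by
  induction k generalizing L P with
  | zero =>
    obtain ⟨rfl, rfl⟩ := Prod.mk.inj (h : (L, P) = _)
    exact ⟨isEXP_zero_indicator hm, isEXP_zero_indicator hn⟩
  | succ k ih =>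
    obtain ⟨L₀, P₀, hmem, f, g, heq⟩ := h
    obtain ⟨rfl, rfl⟩ := Prod.mk.inj heq
    obtain ⟨hL₀, hP₀⟩ := ih hmem
    exact ⟨(hL₀.dotAct f).vUnion_vUp hL₀, hP₀.vUnion_vUp (hP₀.dotAct g)⟩

theorem stmt5 (m n k : ℕ) (hm : 1 ≤ m) (hn : 1 ≤ n)
    (L : Fin m → Finset ℕ) (P : Fin n → Finset ℕ) (h : (L, P) ∈ Uset m n k) :
    (∀ p q : Fin m, p ≠ q → Disjoint (L p) (L q)) ∧
      (∀ p q : Fin n, p ≠ q → Disjoint (P p) (P q)) ∧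
      Finset.univ.sup L = Finset.Icc 1 (2 ^ k) ∧
      Finset.univ.sup P = Finset.Icc 1 (2 ^ k) := by
  obtain ⟨⟨hL_disj, hL_sup⟩, ⟨hP_disj, hP_sup⟩⟩ := isEXP_of_mem_Uset hm hn h
  exact ⟨hL_disj, hP_disj, hL_sup, hP_sup⟩
end

section
/- Let n ≥ 2, 1 ≤ i ≤ n−1, k ≥ 0, and let P be a k-Rvalid vector of size n with exactly i nonempty entries. Then the number of elements of succ(P) having exactly i+1 nonempty entries equals (n−i)·((i+1)^i − i^i). -/
open Finset

theorem stmt9 (n k i : ℕ) (hn : 2 ≤ n) (hi1 : 1 ≤ i) (hin : i ≤ n - 1)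
    (P : Fin n → Finset ℕ) (hP : IsRvalid k P) (hc : nne P = i) :
    ((succSet P).filter (fun Q => nne Q = i + 1)).card =
      (n - i) * ((i + 1) ^ i - i ^ i) := by
  obtain ⟨⟨hdisj, hsup⟩, -, -⟩ := hP
  have hn0 : 0 < n := by omega
  set p0 : Fin n := ⟨0, hn0⟩ with hp0
  set r : ℕ := 2 ^ k with hrdef
  set S : Finset (Fin n) := univ.filter (fun q => P q ≠ ∅) with hS
  have hScard : S.card = i := hc
  have hmem : ∀ q x, x ∈ P q → 1 ≤ x ∧ x ≤ r := by
    intro q x hx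
    have : x ∈ Finset.univ.sup P := Finset.mem_sup.mpr ⟨q, mem_univ q, hx⟩
    rw [hsup] at this
    exact mem_Icc.mp this
  have hr1 : 1 ≤ r := Nat.one_le_two_pow
  have hsupdot : ∀ g : Fin n → Fin n,
      Finset.univ.sup (dotAct P g) = Finset.univ.sup P := by
    intro g
    apply Finset.ext; intro x
    simp only [Finset.mem_sup, dotAct, Finset.mem_biUnion, Finset.mem_filter,
      mem_univ, true_and]
    constructor
    · rintro ⟨q, p, hp, hx⟩; exact ⟨p, hx⟩
    · rintro ⟨p, hx⟩; exact ⟨g p, p, rfl, hx⟩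
  have hvmax : vMax P = r := by
    rw [vMax, hsup]
    apply le_antisymm
    · exact Finset.sup_le fun x hx => (mem_Icc.mp hx).2
    · exact Finset.le_sup (f := id) (mem_Icc.mpr ⟨hr1, le_refl r⟩)
  have hvmaxdot : ∀ g, vMax (dotAct P g) = r := by
    intro g; rw [vMax, hsupdot]; exact hvmax
  set E : (Fin n → Fin n) → (Fin n → Finset ℕ) :=
    fun g => vUnion P (vUp (dotAct P g)) with hE
  have hmemdot : ∀ g q x, x ∈ dotAct P g q ↔ ∃ p, g p = q ∧ x ∈ P p := by
    intro g q x; simp [dotAct]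
  have hdotcong : ∀ g g', (∀ p, P p ≠ ∅ → g p = g' p) → dotAct P g = dotAct P g' := by
    intro g g' hgg
    funext q; apply Finset.ext; intro x
    simp only [hmemdot]
    constructor
    · rintro ⟨p, hpq, hx⟩
      exact ⟨p, by rw [← hgg p (Finset.ne_empty_of_mem hx)]; exact hpq, hx⟩
    · rintro ⟨p, hpq, hx⟩
      exact ⟨p, by rw [hgg p (Finset.ne_empty_of_mem hx)]; exact hpq, hx⟩
  have hEcong : ∀ g g', (∀ p, P p ≠ ∅ → g p = g' p) → E g = E g' := by
    intro g g' hgg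
    rw [hE]
    simp only [hdotcong g g' hgg]
  have hEq : ∀ g q, E g q = P q ∪ (dotAct P g q).image (· + r) := by
    intro g q
    rw [hE]
    simp only [vUnion, vUp, hvmaxdot]
  have hfilterE : ∀ g q, (E g q).filter (fun x => r < x) = (dotAct P g q).image (· + r) := by
    intro g q
    rw [hEq]
    apply Finset.ext; intro x
    simp only [Finset.mem_filter, Finset.mem_union, Finset.mem_image]
    constructor
    · rintro ⟨hx | hx, hrx⟩
      · exact absurd hrx (Nat.not_lt.mpr (hmem q x hx).2)
      · exact hx
    · rintro ⟨y, hy, rfl⟩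
      refine ⟨Or.inr ⟨y, hy, rfl⟩, ?_⟩
      obtain ⟨p, -, hp⟩ := (hmemdot g q y).mp hy
      have := (hmem p y hp).1
      omega
  have hrec : ∀ g g', E g = E g' → ∀ p, P p ≠ ∅ → g p = g' p := by
    intro g g' h p hp
    have hd : dotAct P g = dotAct P g' := by
      funext q
      have h1 := hfilterE g q
      have h2 := hfilterE g' q
      rw [h] at h1
      exact Finset.image_injective (add_left_injective r) (h1.symm.trans h2)
    obtain ⟨x, hx⟩ := Finset.nonempty_iff_ne_empty.mpr hp
    have hx1 : x ∈ dotAct P g (g p) := (hmemdot _ _ _).mpr ⟨p, rfl, hx⟩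
    rw [hd] at hx1
    obtain ⟨p', hp', hxp'⟩ := (hmemdot _ _ _).mp hx1
    have hpp : p' = p := by
      by_contra hne
      exact (Finset.disjoint_left.mp (hdisj p' p hne) hxp') hx
    rw [← hp', hpp]
  have hfilternne : ∀ g, univ.filter (fun q => E g q ≠ ∅) = S ∪ S.image g := by
    intro g
    apply Finset.ext; intro q
    simp only [Finset.mem_filter, mem_univ, true_and, Finset.mem_union, hS,
      Finset.mem_image]
    rw [hEq]
    constructor
    · intro hne
      by_cases hPq : P q = ∅
      · right
        obtain ⟨x, hx⟩ := Finset.nonempty_iff_ne_empty.mpr hne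
        rw [Finset.mem_union, hPq] at hx
        rcases hx with hx | hx
        · exact absurd hx (Finset.notMem_empty x)
        · obtain ⟨y, hy, -⟩ := Finset.mem_image.mp hx
          obtain ⟨p, hpq, hyp⟩ := (hmemdot g q y).mp hy
          exact ⟨p, Finset.ne_empty_of_mem hyp, hpq⟩
      · left; exact hPq
    · intro h
      rcases h with hPq | ⟨p, hPp, hpq⟩
      · intro hcon
        rw [Finset.union_eq_empty] at hcon
        exact hPq hcon.1
      · obtain ⟨x, hx⟩ := Finset.nonempty_iff_ne_empty.mpr hPp
        have hxd : x ∈ dotAct P g q := (hmemdot g q x).mpr ⟨p, hpq, hx⟩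
        exact Finset.ne_empty_of_mem
          (Finset.mem_union_right _ (Finset.mem_image_of_mem _ hxd))
  have hnneE : ∀ g, nne (E g) = i + (S.image g \ S).card := by
    intro g
    rw [nne, hfilternne g, ← Finset.union_sdiff_self_eq_union,
      Finset.card_union_of_disjoint Finset.disjoint_sdiff, hScard]
  set A : Finset (Fin n) → Finset (Fin n → Fin n) :=
    fun B => Fintype.piFinset (fun p => if P p = ∅ then ({p0} : Finset (Fin n)) else B)
    with hA
  have hAmem : ∀ B g, g ∈ A B ↔
      (∀ p, P p = ∅ → g p = p0) ∧ (∀ p, P p ≠ ∅ → g p ∈ B) := by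
    intro B g
    rw [hA]
    simp only [Fintype.mem_piFinset]
    constructor
    · intro h
      constructor
      · intro p hp; have := h p; rw [if_pos hp] at this; exact Finset.mem_singleton.mp this
      · intro p hp; have := h p; rwa [if_neg hp] at this
    · rintro ⟨h0, h1⟩ p
      by_cases hp : P p = ∅
      · rw [if_pos hp]; exact Finset.mem_singleton.mpr (h0 p hp)
      · rw [if_neg hp]; exact h1 p hp
  have hAcard : ∀ B, (A B).card = B.card ^ i := by
    intro B
    rw [hA]
    rw [Fintype.card_piFinset]
    have h1 : ∀ p : Fin n, (if P p = ∅ then ({p0} : Finset (Fin n)) else B).card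
        = if P p ≠ ∅ then B.card else 1 := by
      intro p
      by_cases hp : P p = ∅
      · rw [if_pos hp, if_neg (fun h => h hp), Finset.card_singleton]
      · rw [if_neg hp, if_pos hp]
    rw [Finset.prod_congr rfl (fun p _ => h1 p), ← Finset.prod_filter, ← hS,
      Finset.prod_const, hScard]
  have hmain : (succSet P).filter (fun Q => nne Q = i + 1) =
      ((A univ).filter (fun g => (S.image g \ S).card = 1)).image E := by
    apply Finset.ext; intro Q
    simp only [succSet, Finset.mem_filter, Finset.mem_image, mem_univ, true_and]
    constructor
    · rintro ⟨⟨g, rfl⟩, hQ⟩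
      have hQ' : nne (E g) = i + 1 := hQ
      set g' : Fin n → Fin n := fun p => if P p = ∅ then p0 else g p with hg'
      have hgg : ∀ p, P p ≠ ∅ → g p = g' p := by
        intro p hp; rw [hg']; simp only [if_neg hp]
      have himg : S.image g' = S.image g := by
        apply Finset.image_congr
        intro p hp
        exact (hgg p ((Finset.mem_filter.mp hp).2)).symm
      have hcard1 : (S.image g' \ S).card = 1 := by
        rw [himg]
        have := hnneE g
        omega
      refine ⟨g', ⟨(hAmem univ g').mpr
        ⟨fun p hp => by rw [hg']; simp only [if_pos hp],
         fun p _ => mem_univ _⟩, hcard1⟩, (hEcong g g' hgg).symm⟩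
    · rintro ⟨g, ⟨-, hcond⟩, rfl⟩
      refine ⟨⟨g, rfl⟩, ?_⟩
      show nne (E g) = i + 1
      rw [hnneE g, hcond]
  rw [hmain, Finset.card_image_of_injOn]
  swap
  · intro g hg g' hg' h
    simp only [Finset.coe_filter, Set.mem_setOf_eq] at hg hg'
    funext p
    by_cases hp : P p = ∅
    · rw [((hAmem univ g).mp hg.1).1 p hp, ((hAmem univ g').mp hg'.1).1 p hp]
    · exact hrec g g' h p hp
  have hsplit : (A univ).filter (fun g => (S.image g \ S).card = 1)
      = Sᶜ.biUnion (fun t => (A univ).filter (fun g => S.image g \ S = {t})) := by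
    apply Finset.ext; intro g
    simp only [Finset.mem_biUnion, Finset.mem_filter, Finset.mem_compl]
    constructor
    · rintro ⟨hgT, hcard⟩
      obtain ⟨t, ht⟩ := Finset.card_eq_one.mp hcard
      have htS : t ∉ S := by
        have h1 : t ∈ S.image g \ S := ht ▸ Finset.mem_singleton_self t
        exact (Finset.mem_sdiff.mp h1).2
      exact ⟨t, htS, hgT, ht⟩
    · rintro ⟨t, htS, hgT, ht⟩
      exact ⟨hgT, by rw [ht]; exact Finset.card_singleton t⟩
  have hdisjU : ∀ t ∈ Sᶜ, ∀ t' ∈ Sᶜ, t ≠ t' →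
      Disjoint ((A univ).filter (fun g => S.image g \ S = {t}))
        ((A univ).filter (fun g => S.image g \ S = {t'})) := by
    intro t _ t' _ hne
    rw [Finset.disjoint_left]
    intro g hg hg'
    have h1 := (Finset.mem_filter.mp hg).2
    have h2 := (Finset.mem_filter.mp hg').2
    rw [h1] at h2
    exact hne (Finset.singleton_injective h2)
  have hpiece : ∀ t ∈ Sᶜ, ((A univ).filter (fun g => S.image g \ S = {t})).card
      = (i + 1) ^ i - i ^ i := by
    intro t ht
    have htS : t ∉ S := Finset.mem_compl.mp ht
    have hASsub : A S ⊆ A (insert t S) := by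
      intro g hg
      obtain ⟨h0, h1⟩ := (hAmem S g).mp hg
      exact (hAmem _ g).mpr ⟨h0, fun p hp => Finset.mem_insert_of_mem (h1 p hp)⟩
    have hmemS : ∀ p : Fin n, p ∈ S ↔ P p ≠ ∅ := by
      intro p
      rw [hS, Finset.mem_filter]
      simp
    have hset : (A univ).filter (fun g => S.image g \ S = {t})
        = A (insert t S) \ A S := by
      apply Finset.ext; intro g
      simp only [Finset.mem_filter, Finset.mem_sdiff]
      constructor
      · rintro ⟨hgT, himg⟩
        obtain ⟨h0, -⟩ := (hAmem univ g).mp hgT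
        have hsub : ∀ p, P p ≠ ∅ → g p ∈ insert t S := by
          intro p hp
          by_cases hgp : g p ∈ S
          · exact Finset.mem_insert_of_mem hgp
          · have h1 : g p ∈ S.image g \ S := Finset.mem_sdiff.mpr
              ⟨Finset.mem_image_of_mem g ((hmemS p).mpr hp), hgp⟩
            rw [himg] at h1
            rw [Finset.mem_singleton.mp h1]
            exact Finset.mem_insert_self t S
        have hnall : ¬ (∀ p, P p ≠ ∅ → g p ∈ S) := by
          intro hall
          have h1 : t ∈ S.image g \ S := himg ▸ Finset.mem_singleton_self t
          obtain ⟨p, hpS, hpt⟩ := Finset.mem_image.mp (Finset.mem_sdiff.mp h1).1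
          have h2 : g p ∈ S := hall p ((hmemS p).mp hpS)
          rw [hpt] at h2
          exact (Finset.mem_sdiff.mp h1).2 h2
        refine ⟨(hAmem _ g).mpr ⟨h0, hsub⟩, fun hAS => hnall ((hAmem S g).mp hAS).2⟩
      · rintro ⟨hgI, hgS⟩
        obtain ⟨h0, hsub⟩ := (hAmem _ g).mp hgI
        have hnall : ¬ ∀ p, P p ≠ ∅ → g p ∈ S := fun hall => hgS ((hAmem S g).mpr ⟨h0, hall⟩)
        push_neg at hnall
        obtain ⟨p, hp, hpS⟩ := hnall
        have hgpt : g p = t := by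
          rcases Finset.mem_insert.mp (hsub p hp.ne_empty) with h | h
          · exact h
          · exact absurd h hpS
        refine ⟨(hAmem univ g).mpr ⟨h0, fun p' _ => mem_univ _⟩, ?_⟩
        apply Finset.Subset.antisymm
        · intro x hx
          obtain ⟨hxim, hxS⟩ := Finset.mem_sdiff.mp hx
          obtain ⟨p', hp'S, hp'x⟩ := Finset.mem_image.mp hxim
          have h1 := hsub p' ((hmemS p').mp hp'S)
          rw [hp'x] at h1
          rcases Finset.mem_insert.mp h1 with h | h
          · exact Finset.mem_singleton.mpr h
          · exact absurd h hxS
        · intro x hx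
          rw [Finset.mem_singleton.mp hx]
          refine Finset.mem_sdiff.mpr ⟨?_, htS⟩
          rw [← hgpt]
          exact Finset.mem_image_of_mem g ((hmemS p).mpr hp.ne_empty)
    rw [hset, Finset.card_sdiff_of_subset hASsub, hAcard, hAcard,
      Finset.card_insert_of_notMem htS, hScard]
  rw [hsplit, Finset.card_biUnion hdisjU, Finset.sum_congr rfl hpiece,
    Finset.sum_const, smul_eq_mul, Finset.card_compl, Fintype.card_fin, hScard]
end
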